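/- Let q be a prime power, n coprime to q and not divisible by 3, and C a cyclic code of length n over F_q whose defining set contains {0, 1, 3, 4, 6}. Then the minimum distance of C is at least 5. -/
import Mathlib

private lemma cyclic_core2 {K : Type*} [Field K] (β1 β2 b1 b2 : K)
    (h12 : β1 ≠ β2) (hb1 : b1 ≠ 0)
    (e0 : b1 + b2 = 0) (e1 : b1*β1 + b2*β2 = 0) : False := by
  have hv : b1 * (β1-β2) = 0 := by linear_combination e1 - β2*e0
  rcases mul_eq_zero.mp hv with h | h
  · exact hb1 h
  · exact h12 (sub_eq_zero.mp h)

private lemma cyclic_core3 {K : Type*} [Field K] (β1 β2 β3 b1 b2 b3 : K)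
    (h12 : β1 ≠ β2) (h13 : β1 ≠ β3)
    (hb1 : b1 ≠ 0)
    (e0 : b1 + b2 + b3 = 0)
    (e1 : b1*β1 + b2*β2 + b3*β3 = 0)
    (e3 : b1*β1^3 + b2*β2^3 + b3*β3^3 = 0)
    (e4 : b1*β1^4 + b2*β2^4 + b3*β3^4 = 0) :
    β1^3 = β2^3 := by
  have hA : (β1+β2+β3) * (b1*β1^2+b2*β2^2+b3*β3^2) = 0 := by
    linear_combination e3 + (β1*β2+β1*β3+β2*β3)*e1 - β1*β2*β3*e0
  have hB : (β1*β2+β1*β3+β2*β3) * (b1*β1^2+b2*β2^2+b3*β3^2) = 0 := by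
    linear_combination (β1+β2+β3)*e3 + β1*β2*β3*e1 - e4
  by_cases hu : b1*β1^2+b2*β2^2+b3*β3^2 = 0
  · exfalso
    have hv : b1 * ((β1-β2)*(β1-β3)) = 0 := by
      linear_combination hu - (β2+β3)*e1 + β2*β3*e0
    rcases mul_eq_zero.mp hv with h | h
    · exact hb1 h
    · rcases mul_eq_zero.mp h with h | h
      · exact h12 (sub_eq_zero.mp h)
      · exact h13 (sub_eq_zero.mp h)
  · have he1 : β1+β2+β3 = 0 := (mul_eq_zero.mp hA).resolve_right hu
    have he2 : β1*β2+β1*β3+β2*β3 = 0 := (mul_eq_zero.mp hB).resolve_right hu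
    linear_combination (β1^2 - β2^2)*he1 - (β1 - β2)*he2

private lemma cyclic_core4 {K : Type*} [Field K] (β1 β2 β3 β4 b1 b2 b3 b4 : K)
    (h12 : β1 ≠ β2) (h13 : β1 ≠ β3) (h14 : β1 ≠ β4)
    (h23 : β2 ≠ β3) (h24 : β2 ≠ β4) (h34 : β3 ≠ β4)
    (hb1 : b1 ≠ 0)
    (e0 : b1 + b2 + b3 + b4 = 0)
    (e1 : b1*β1 + b2*β2 + b3*β3 + b4*β4 = 0)
    (e3 : b1*β1^3 + b2*β2^3 + b3*β3^3 + b4*β4^3 = 0)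
    (e4 : b1*β1^4 + b2*β2^4 + b3*β3^4 + b4*β4^4 = 0)
    (e6 : b1*β1^6 + b2*β2^6 + b3*β3^6 + b4*β4^6 = 0) :
    β1^3 = β2^3 ∨ β1^3 = β3^3 ∨ β1^3 = β4^3 ∨ β2^3 = β3^3 ∨ β2^3 = β4^3 ∨ β3^3 = β4^3 := by
  have hA : (β1*β2+β1*β3+β1*β4+β2*β3+β2*β4+β3*β4) * (b1*β1^2+b2*β2^2+b3*β3^2+b4*β4^2) = 0 := by
    linear_combination (β1+β2+β3+β4)*e3 + (β1*β2*β3+β1*β2*β4+β1*β3*β4+β2*β3*β4)*e1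
      - (β1*β2*β3*β4)*e0 - e4
  have hB : b1*β1^5 + b2*β2^5 + b3*β3^5 + b4*β4^5
      = (β1*β2*β3+β1*β2*β4+β1*β3*β4+β2*β3*β4) * (b1*β1^2+b2*β2^2+b3*β3^2+b4*β4^2) := by
    linear_combination (β1+β2+β3+β4)*e4 - (β1*β2+β1*β3+β1*β4+β2*β3+β2*β4+β3*β4)*e3
      - (β1*β2*β3*β4)*e1
  have hC : ((β1+β2+β3+β4)*(β1*β2*β3+β1*β2*β4+β1*β3*β4+β2*β3*β4) - β1*β2*β3*β4)
      * (b1*β1^2+b2*β2^2+b3*β3^2+b4*β4^2) = 0 := by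
    linear_combination -(β1+β2+β3+β4)*hB + e6 + (β1*β2+β1*β3+β1*β4+β2*β3+β2*β4+β3*β4)*e4
      - (β1*β2*β3+β1*β2*β4+β1*β3*β4+β2*β3*β4)*e3
  by_cases hu : b1*β1^2+b2*β2^2+b3*β3^2+b4*β4^2 = 0
  · exfalso
    have hv : b1 * ((β1-β2)*(β1-β3)*(β1-β4)) = 0 := by
      linear_combination e3 - (β2+β3+β4)*hu + (β2*β3+β2*β4+β3*β4)*e1 - β2*β3*β4*e0
    rcases mul_eq_zero.mp hv with h | h
    · exact hb1 h
    · rcases mul_eq_zero.mp h with h | h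
      · rcases mul_eq_zero.mp h with h | h
        · exact h12 (sub_eq_zero.mp h)
        · exact h13 (sub_eq_zero.mp h)
      · exact h14 (sub_eq_zero.mp h)
  · have he2 : β1*β2+β1*β3+β1*β4+β2*β3+β2*β4+β3*β4 = 0 :=
      (mul_eq_zero.mp hA).resolve_right hu
    have he4 : (β1+β2+β3+β4)*(β1*β2*β3+β1*β2*β4+β1*β3*β4+β2*β3*β4) - β1*β2*β3*β4 = 0 :=
      (mul_eq_zero.mp hC).resolve_right hu
    have hf1 : (β1 - (β1+β2+β3+β4))*(β1^3 - (β1*β2*β3+β1*β2*β4+β1*β3*β4+β2*β3*β4)) = 0 := by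
      linear_combination he4 - β1^2*he2
    have hf2 : (β2 - (β1+β2+β3+β4))*(β2^3 - (β1*β2*β3+β1*β2*β4+β1*β3*β4+β2*β3*β4)) = 0 := by
      linear_combination he4 - β2^2*he2
    have hf3 : (β3 - (β1+β2+β3+β4))*(β3^3 - (β1*β2*β3+β1*β2*β4+β1*β3*β4+β2*β3*β4)) = 0 := by
      linear_combination he4 - β3^2*he2
    have hf4 : (β4 - (β1+β2+β3+β4))*(β4^3 - (β1*β2*β3+β1*β2*β4+β1*β3*β4+β2*β3*β4)) = 0 := by
      linear_combination he4 - β4^2*he2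
    rcases mul_eq_zero.mp hf1 with g1 | g1 <;> rcases mul_eq_zero.mp hf2 with g2 | g2 <;>
      rcases mul_eq_zero.mp hf3 with g3 | g3 <;> rcases mul_eq_zero.mp hf4 with g4 | g4 <;>
    first
      | exact absurd (by linear_combination g1 - g2) h12
      | exact absurd (by linear_combination g1 - g3) h13
      | exact absurd (by linear_combination g1 - g4) h14
      | exact absurd (by linear_combination g2 - g3) h23
      | exact absurd (by linear_combination g2 - g4) h24
      | exact absurd (by linear_combination g3 - g4) h34
      | exact Or.inl (by linear_combination g1 - g2)
      | exact Or.inr (Or.inl (by linear_combination g1 - g3))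
      | exact Or.inr (Or.inr (Or.inl (by linear_combination g1 - g4)))
      | exact Or.inr (Or.inr (Or.inr (Or.inl (by linear_combination g2 - g3))))
      | exact Or.inr (Or.inr (Or.inr (Or.inr (Or.inl (by linear_combination g2 - g4)))))
      | exact Or.inr (Or.inr (Or.inr (Or.inr (Or.inr (by linear_combination g3 - g4)))))

/-- If the defining set of a cyclic code of length `n` over `F_q` contains
`{0, 1, 3, 4, 6}` and `3 ∤ n`, then the minimum distance is at least `5`:
every nonzero codeword has Hamming weight `≥ 5`. -/
theorem cyclic_code_min_dist (Fq : Type*) [Field Fq] [Fintype Fq]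
    (n : ℕ) (hn : 0 < n) (hcop : Nat.Coprime n (Fintype.card Fq))
    (h3 : ¬ (3 ∣ n))
    (α : AlgebraicClosure Fq) (hα : orderOf α = n)
    (S : Finset ℕ) (hS : ({0, 1, 3, 4, 6} : Finset ℕ) ⊆ S)
    (c : Polynomial Fq) (hc : c ≠ 0) (hdeg : c.natDegree < n)
    (hroot : ∀ i ∈ S, Polynomial.aeval (α ^ i) c = 0) :
    5 ≤ c.support.card := by
  by_contra hcard
  push_neg at hcard
  -- basic facts about α
  have hα0 : α ≠ 0 := by
    intro h
    rw [h] at hα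
    have h1 : (0:AlgebraicClosure Fq) ^ n = 1 := hα ▸ pow_orderOf_eq_one 0
    rw [zero_pow hn.ne'] at h1
    exact zero_ne_one h1
  have hcancel : ∀ a b : ℕ, a ≤ b → α ^ a = α ^ b → n ∣ b - a := by
    intro a b hab h
    have h2 : α ^ a * α ^ (b - a) = α ^ a * 1 := by
      rw [mul_one, ← pow_add, h]
      congr 1
      omega
    have h4 : α ^ (b - a) = 1 := mul_left_cancel₀ (pow_ne_zero a hα0) h2
    exact hα ▸ orderOf_dvd_of_pow_eq_one h4
  have hcop3 : Nat.Coprime n 3 :=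
    ((Nat.Prime.coprime_iff_not_dvd Nat.prime_three).mpr h3).symm
  have hinj : ∀ j k : ℕ, j < n → k < n → α ^ j = α ^ k → j = k := by
    intro j k hj hk h
    rcases le_total j k with hle | hle
    · have hd := hcancel j k hle h
      have := Nat.eq_zero_of_dvd_of_lt hd (by omega)
      omega
    · have hd := hcancel k j hle h.symm
      have := Nat.eq_zero_of_dvd_of_lt hd (by omega)
      omega
  have hcube : ∀ j k : ℕ, j < n → k < n → (α ^ j) ^ 3 = (α ^ k) ^ 3 → j = k := by
    intro j k hj hk h
    rw [← pow_mul, ← pow_mul] at h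
    rcases le_total j k with hle | hle
    · have hd := hcancel (j*3) (k*3) (by omega) h
      have hd2 : n ∣ (k - j) * 3 := by
        have he : k * 3 - j * 3 = (k - j) * 3 := by omega
        rwa [he] at hd
      have := Nat.eq_zero_of_dvd_of_lt (Nat.Coprime.dvd_of_dvd_mul_right hcop3 hd2) (by omega)
      omega
    · have hd := hcancel (k*3) (j*3) (by omega) h.symm
      have hd2 : n ∣ (j - k) * 3 := by
        have he : j * 3 - k * 3 = (j - k) * 3 := by omega
        rwa [he] at hd
      have := Nat.eq_zero_of_dvd_of_lt (Nat.Coprime.dvd_of_dvd_mul_right hcop3 hd2) (by omega)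
      omega
  -- the key evaluation sums
  have key : ∀ i ∈ ({0, 1, 3, 4, 6} : Finset ℕ),
      ∑ j ∈ c.support, algebraMap Fq (AlgebraicClosure Fq) (c.coeff j) * (α ^ j) ^ i = 0 := by
    intro i hi
    have h := hroot i (hS hi)
    rw [Polynomial.aeval_def, Polynomial.eval₂_eq_sum, Polynomial.sum_def] at h
    rw [← h]
    exact Finset.sum_congr rfl fun j _ => by rw [pow_right_comm]
  -- facts about support elements
  have hlt : ∀ j ∈ c.support, j < n := fun j hj =>
    lt_of_le_of_lt (Polynomial.le_natDegree_of_mem_supp j hj) hdeg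
  have hbne : ∀ j ∈ c.support, algebraMap Fq (AlgebraicClosure Fq) (c.coeff j) ≠ 0 := by
    intro j hj h
    exact Polynomial.mem_support_iff.mp hj
      ((algebraMap Fq (AlgebraicClosure Fq)).injective (by simpa using h))
  have hβne : ∀ j ∈ c.support, ∀ k ∈ c.support, j ≠ k → α ^ j ≠ α ^ k := by
    intro j hj k hk hne h
    exact hne (hinj j k (hlt j hj) (hlt k hk) h)
  have hβcube : ∀ j ∈ c.support, ∀ k ∈ c.support, j ≠ k → (α ^ j) ^ 3 ≠ (α ^ k) ^ 3 := by
    intro j hj k hk hne h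
    exact hne (hcube j k (hlt j hj) (hlt k hk) h)
  have hpos : 0 < c.support.card :=
    Finset.card_pos.mpr (Polynomial.support_nonempty.mpr hc)
  have hcases : c.support.card = 1 ∨ c.support.card = 2 ∨ c.support.card = 3 ∨
      c.support.card = 4 := by omega
  rcases hcases with h | h | h | h
  · -- weight 1
    obtain ⟨a, hs⟩ := Finset.card_eq_one.mp h
    have s0 := key 0 (by simp)
    rw [hs, Finset.sum_singleton] at s0
    simp only [pow_zero, mul_one] at s0
    exact hbne a (hs ▸ Finset.mem_singleton_self a) s0
  · -- weight 2
    obtain ⟨a, b, hab, hs⟩ := Finset.card_eq_two.mp h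
    have ha : a ∈ c.support := hs ▸ (by simp)
    have hb : b ∈ c.support := hs ▸ (by simp)
    have hsum : ∀ f : ℕ → AlgebraicClosure Fq, ∑ j ∈ c.support, f j = f a + f b := by
      intro f
      rw [hs, Finset.sum_insert (by simp [hab]), Finset.sum_singleton]
    have s0 := key 0 (by simp); rw [hsum] at s0
    have s1 := key 1 (by simp); rw [hsum] at s1
    exact cyclic_core2 (α ^ a) (α ^ b) (algebraMap Fq (AlgebraicClosure Fq) (c.coeff a)) (algebraMap Fq (AlgebraicClosure Fq) (c.coeff b)) (hβne a ha b hb hab)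
      (hbne a ha) (by linear_combination s0) (by linear_combination s1)
  · -- weight 3
    obtain ⟨a, b, d, hab, had, hbd, hs⟩ := Finset.card_eq_three.mp h
    have ha : a ∈ c.support := hs ▸ (by simp)
    have hb : b ∈ c.support := hs ▸ (by simp)
    have hd : d ∈ c.support := hs ▸ (by simp)
    have hsum : ∀ f : ℕ → AlgebraicClosure Fq, ∑ j ∈ c.support, f j = f a + f b + f d := by
      intro f
      rw [hs, Finset.sum_insert (by simp [hab, had]),
        Finset.sum_insert (by simp [hbd]), Finset.sum_singleton]
      ring
    have s0 := key 0 (by simp); rw [hsum] at s0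
    have s1 := key 1 (by simp); rw [hsum] at s1
    have s3 := key 3 (by simp); rw [hsum] at s3
    have s4 := key 4 (by simp); rw [hsum] at s4
    exact hβcube a ha b hb hab
      (cyclic_core3 (α ^ a) (α ^ b) (α ^ d) (algebraMap Fq (AlgebraicClosure Fq) (c.coeff a)) (algebraMap Fq (AlgebraicClosure Fq) (c.coeff b)) (algebraMap Fq (AlgebraicClosure Fq) (c.coeff d)) (hβne a ha b hb hab)
        (hβne a ha d hd had) (hbne a ha)
        (by linear_combination s0) (by linear_combination s1)
        (by linear_combination s3) (by linear_combination s4))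
  · -- weight 4
    obtain ⟨a, t, hat, hins, ht⟩ := Finset.card_eq_succ.mp h
    obtain ⟨b, d, e, hbd, hbe, hde, hts⟩ := Finset.card_eq_three.mp ht
    rw [hts] at hins hat
    have hab : a ≠ b := by simp at hat; tauto
    have had : a ≠ d := by simp at hat; tauto
    have hae : a ≠ e := by simp at hat; tauto
    have hs : c.support = insert a {b, d, e} := hins.symm
    have ha : a ∈ c.support := hs ▸ (by simp)
    have hb : b ∈ c.support := hs ▸ (by simp)
    have hd : d ∈ c.support := hs ▸ (by simp)
    have he : e ∈ c.support := hs ▸ (by simp)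
    have hsum : ∀ f : ℕ → AlgebraicClosure Fq, ∑ j ∈ c.support, f j = f a + f b + f d + f e := by
      intro f
      rw [hs, Finset.sum_insert (by simp [hab, had, hae]),
        Finset.sum_insert (by simp [hbd, hbe]), Finset.sum_insert (by simp [hde]),
        Finset.sum_singleton]
      ring
    have s0 := key 0 (by simp); rw [hsum] at s0
    have s1 := key 1 (by simp); rw [hsum] at s1
    have s3 := key 3 (by simp); rw [hsum] at s3
    have s4 := key 4 (by simp); rw [hsum] at s4
    have s6 := key 6 (by simp); rw [hsum] at s6
    have hres := cyclic_core4 (α ^ a) (α ^ b) (α ^ d) (α ^ e) (algebraMap Fq (AlgebraicClosure Fq) (c.coeff a)) (algebraMap Fq (AlgebraicClosure Fq) (c.coeff b)) (algebraMap Fq (AlgebraicClosure Fq) (c.coeff d)) (algebraMap Fq (AlgebraicClosure Fq) (c.coeff e))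
      (hβne a ha b hb hab) (hβne a ha d hd had) (hβne a ha e he hae)
      (hβne b hb d hd hbd) (hβne b hb e he hbe) (hβne d hd e he hde)
      (hbne a ha)
      (by linear_combination s0) (by linear_combination s1)
      (by linear_combination s3) (by linear_combination s4) (by linear_combination s6)
    rcases hres with h' | h' | h' | h' | h' | h'
    · exact hβcube a ha b hb hab h'
    · exact hβcube a ha d hd had h'
    · exact hβcube a ha e he hae h'
    · exact hβcube b hb d hd hbd h'
    · exact hβcube b hb e he hbe h'
    · exact hβcube d hd e he hde h'
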